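/- arXiv:1006.2500 — 4 statements merged into one kernel-verified Lean document; each statement's English description precedes it below -/
import Mathlib

section
/- Let p be a prime, n a positive integer, q an integer coprime to p, and k a positive integer. Then the number of k-cycles with a marked initial vertex in the exponentiation graph Γ_{p,n,q} (equivalently, the trace of the k-th power of its adjacency matrix) is at most (p-1)^k. -/
/-!
Write `u` for `q` as a unit modulo `p ^ m` and `H_m` for the subgroup generated by `u ^ p ^ m`.
The out-neighbours of `x` form the coset `u ^ x * H_m`. At level `n + 1` the element
`u ^ p ^ n` has order dividing `p - 1`, hence prime to `p`, so it generates `H_(n+1)` and the coset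
of `x` only depends on `x mod p ^ n`. The adjacency matrix at level `n + 1` therefore factors as
`U * V` through reduction mod `p ^ n`, and `V * U` is `|H_(n+1) ∩ ker|` times the adjacency matrix
at level `n`, because reduction maps `H_(n+1)` onto `H_n`. Since `U * V` and `V * U` have the same
traces of powers, induction gives `trace (A_n ^ k) = |H_n| ^ k`, and `|H_n|` divides `p - 1`.
-/

open Classical

noncomputable def expAdj (p n : ℕ) (q : ℤ) [Fact p.Prime] :
    Matrix (ZMod (p ^ n)) (ZMod (p ^ n)) ℤ := fun x w =>
  if ∃ y : ℕ, (y : ZMod (p ^ n)) = x ∧ ((q : ZMod (p ^ n)) ^ y = w) then 1 else 0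

open Matrix Subgroup Finset

section Lumping

variable {α γ R : Type*} [Fintype α] [Fintype γ] [DecidableEq α] [DecidableEq γ]
  [CommSemiring R]

theorem Matrix.mul_pow_mul_comm (U : Matrix α γ R) (V : Matrix γ α R) (k : ℕ) :
    (U * V) ^ k * U = U * (V * U) ^ k := by
  induction k with
  | zero => simp
  | succ k ih => rw [pow_succ', Matrix.mul_assoc, ih, pow_succ', ← Matrix.mul_assoc,
      ← Matrix.mul_assoc, Matrix.mul_assoc U]

theorem Matrix.trace_mul_pow_succ_comm (U : Matrix α γ R) (V : Matrix γ α R) (k : ℕ) :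
    trace ((U * V) ^ (k + 1)) = trace ((V * U) ^ (k + 1)) := by
  rw [pow_succ, ← Matrix.mul_assoc, trace_mul_comm, Matrix.mul_pow_mul_comm, ← Matrix.mul_assoc,
    ← pow_succ']

theorem Matrix.trace_pow_succ_eq_of_row_eq (A : Matrix α α R) (f : α → γ) (s : γ → α)
    (hA : ∀ x, A x = A (s (f x))) (k : ℕ) :
    trace (A ^ (k + 1)) = trace ((of fun c c' => ∑ w with f w = c', A (s c) w) ^ (k + 1)) := by
  have hUV : A = (of fun x c => if f x = c then (1 : R) else 0) * of fun c w => A (s c) w := by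
    ext x w
    simp [mul_apply, hA x]
  have hVU : (of fun c w => A (s c) w) * (of fun x c => if f x = c then (1 : R) else 0) =
      of fun c c' => ∑ w with f w = c', A (s c) w := by
    ext c c'
    simp [mul_apply, Finset.sum_filter]
  conv_lhs => rw [hUV]
  rw [trace_mul_pow_succ_comm, hVU]

end Lumping

theorem Subgroup.zpowers_pow_eq_of_coprime {G : Type*} [Group G] {g : G} {k : ℕ}
    (h : k.Coprime (orderOf g)) : zpowers (g ^ k) = zpowers g :=
  le_antisymm (zpowers_le.mpr (pow_mem (mem_zpowers g) k))
    (zpowers_le.mpr (mem_zpowers_pow_iff.mpr h))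

theorem MonoidHom.card_filter_mul_eq {G G' X : Type*} [Group G] [Fintype G] [Group G']
    [DecidableEq X]    (f : G →* G') (a : G') {F : G' → X} (hF : Function.Injective F) (c : X) :
    #{g | F (a * f g) = c} = if ∃ y ∈ f.range, F (a * y) = c then Nat.card f.ker else 0 := by
  split_ifs with hc
  · obtain ⟨_, ⟨g₀, rfl⟩, rfl⟩ := hc
    have hfib : ∀ g, F (a * f g) = F (a * f g₀) ↔ f g = f g₀ := fun g => by
      rw [hF.eq_iff, mul_right_inj]
    simp_rw [hfib]
    rw [MonoidHom.card_fiber_eq_of_mem_range f ⟨g₀, rfl⟩ ⟨1, map_one f⟩,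
      Nat.card_eq_fintype_card, Fintype.card_subtype]
    simp [MonoidHom.mem_ker]
  · rw [Finset.card_eq_zero, Finset.filter_eq_empty_iff]
    exact fun g _ hg => hc ⟨f g, ⟨g, rfl⟩, hg⟩

section PrimePowerUnits

variable {p : ℕ} [Fact p.Prime]

theorem ZMod.orderOf_pow_prime_pow_dvd {m j : ℕ} (hmj : m ≤ j + 1) (g : (ZMod (p ^ m))ˣ) :
    orderOf (g ^ p ^ j) ∣ p - 1 := by
  obtain ⟨c, hc⟩ : Nat.totient (p ^ m) ∣ p ^ j * (p - 1) := by
    rw [← Nat.totient_prime_pow_succ Fact.out]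
    exact Nat.totient_dvd_of_dvd (pow_dvd_pow p hmj)
  apply orderOf_dvd_of_pow_eq_one
  rw [← pow_mul, hc, pow_mul, ZMod.pow_totient, one_pow]

theorem ZMod.coprime_orderOf_pow_prime_pow {m j : ℕ} (hmj : m ≤ j + 1) (g : (ZMod (p ^ m))ˣ) :
    p.Coprime (orderOf (g ^ p ^ j)) :=
  ((Nat.coprime_self_sub_right (Fact.out : p.Prime).one_le).mpr
    (Nat.coprime_one_right p)).coprime_dvd_right (ZMod.orderOf_pow_prime_pow_dvd hmj g)

theorem ZMod.val_natCast_val_pow_succ {n : ℕ} (c : ZMod (p ^ n)) :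
    (c.val : ZMod (p ^ (n + 1))).val = c.val :=
  ZMod.val_cast_of_lt
    (c.val_lt.trans_le (Nat.pow_le_pow_right (Fact.out : p.Prime).pos n.le_succ))

end PrimePowerUnits

section ExpGraph

variable {p : ℕ}

variable (p) in
def levelHom (n : ℕ) : ZMod (p ^ (n + 1)) →+* ZMod (p ^ n) :=
  ZMod.castHom (pow_dvd_pow p n.le_succ) _

variable {q : ℤ} (hq : IsCoprime q p)

def baseUnit (m : ℕ) : (ZMod (p ^ m))ˣ :=
  ZMod.unitOfIsCoprime q (by rw [Nat.cast_pow]; exact hq.pow_right)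

def expSubgroup (m : ℕ) : Subgroup (ZMod (p ^ m))ˣ :=
  zpowers (baseUnit hq m ^ p ^ m)

def levelRestrict (n : ℕ) : expSubgroup hq (n + 1) →* (ZMod (p ^ n))ˣ :=
  (Units.map (levelHom p n : ZMod (p ^ (n + 1)) →* ZMod (p ^ n))).comp
    (expSubgroup hq (n + 1)).subtype

theorem map_levelHom_baseUnit (n : ℕ) :
    Units.map (levelHom p n : ZMod (p ^ (n + 1)) →* ZMod (p ^ n)) (baseUnit hq (n + 1)) =
      baseUnit hq n :=
  Units.ext (by simp [levelHom, baseUnit])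

variable [Fact p.Prime]

theorem expAdj_eq_ite (m : ℕ) (x w : ZMod (p ^ m)) :
    expAdj p m q x w =
      if ∃ h ∈ expSubgroup hq m,
          ((baseUnit hq m ^ x.val * h : (ZMod (p ^ m))ˣ) : ZMod (p ^ m)) = w
      then 1 else 0 := by
  refine if_congr ⟨?_, ?_⟩ rfl rfl
  · rintro ⟨y, rfl, rfl⟩
    refine ⟨(baseUnit hq m ^ p ^ m) ^ (y / p ^ m), pow_mem (mem_zpowers _) _, ?_⟩
    rw [← pow_mul, ← pow_add, ZMod.val_natCast, Nat.mod_add_div, Units.val_pow_eq_pow_val]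
    rfl
  · rintro ⟨h, hh, rfl⟩
    obtain ⟨t, rfl⟩ := mem_powers_iff_mem_zpowers.mpr hh
    refine ⟨x.val + p ^ m * t, by simp, ?_⟩
    rw [pow_add, pow_mul, Units.val_mul, Units.val_pow_eq_pow_val, Units.val_pow_eq_pow_val,
      Units.val_pow_eq_pow_val]
    rfl

theorem expSubgroup_succ (n : ℕ) :
    expSubgroup hq (n + 1) = zpowers (baseUnit hq (n + 1) ^ p ^ n) := by
  rw [← zpowers_pow_eq_of_coprime (ZMod.coprime_orderOf_pow_prime_pow le_rfl _), ← pow_mul,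
    ← pow_succ]
  rfl

theorem expAdj_succ_row_eq (hq : IsCoprime q p) (n : ℕ) (x : ZMod (p ^ (n + 1))) :
    expAdj p (n + 1) q x = expAdj p (n + 1) q ((levelHom p n x).val : ZMod (p ^ (n + 1))) := by
  set g := baseUnit hq (n + 1) ^ p ^ n
  have hval : ((levelHom p n x).val : ZMod (p ^ (n + 1))).val = x.val % p ^ n := by
    have hx : levelHom p n x = (x.val : ZMod (p ^ n)) := by simp [levelHom]
    rw [ZMod.val_natCast_val_pow_succ, hx, ZMod.val_natCast]
  have hshift : baseUnit hq (n + 1) ^ x.val =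
      baseUnit hq (n + 1) ^ (x.val % p ^ n) * g ^ (x.val / p ^ n) := by
    rw [← pow_mul, ← pow_add, Nat.mod_add_div]
  have hgt : g ^ (x.val / p ^ n) ∈ zpowers g := pow_mem (mem_zpowers g) _
  funext w
  rw [expAdj_eq_ite hq, expAdj_eq_ite hq, hval, hshift, expSubgroup_succ]
  refine if_congr ⟨fun ⟨h, hh, e⟩ => ⟨_, mul_mem hgt hh, by rwa [← mul_assoc]⟩,
    fun ⟨h, hh, e⟩ => ⟨_, mul_mem (inv_mem hgt) hh, by simpa [mul_assoc] using e⟩⟩ rfl rfl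

theorem range_levelRestrict (n : ℕ) :
    (levelRestrict hq n).range = expSubgroup hq n := by
  rw [levelRestrict, MonoidHom.range_comp, range_subtype, expSubgroup_succ, MonoidHom.map_zpowers,
    map_pow, map_levelHom_baseUnit, expSubgroup]

theorem card_expSubgroup_succ (n : ℕ) :
    Nat.card (expSubgroup hq (n + 1)) =
      Nat.card (levelRestrict hq n).ker * Nat.card (expSubgroup hq n) := by
  rw [← (levelRestrict hq n).ker.card_mul_index, index_ker, range_levelRestrict]

theorem sum_fibre_expAdj_succ (n : ℕ) (c c' : ZMod (p ^ n)) :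
    ∑ w with levelHom p n w = c', expAdj p (n + 1) q (c.val : ZMod (p ^ (n + 1))) w =
      Nat.card (levelRestrict hq n).ker * expAdj p n q c c' := by
  set a := baseUnit hq (n + 1) ^ c.val
  have hcount : #{w | levelHom p n w = c' ∧ ∃ h ∈ expSubgroup hq (n + 1),
        ((a * h : (ZMod (p ^ (n + 1)))ˣ) : ZMod (p ^ (n + 1))) = w} =
      #{h | ((Units.map (levelHom p n : ZMod (p ^ (n + 1)) →* ZMod (p ^ n)) a *
        levelRestrict hq n h : (ZMod (p ^ n))ˣ) : ZMod (p ^ n)) = c'} := by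
    symm
    refine Finset.card_bij (fun h _ => ((a * h : (ZMod (p ^ (n + 1)))ˣ) : ZMod (p ^ (n + 1))))
      (fun h hh => ?_) (fun h₁ _ h₂ _ e => ?_) (fun w hw => ?_)
    · simp only [Finset.mem_filter, Finset.mem_univ, true_and] at hh ⊢
      exact ⟨by simpa [levelRestrict] using hh, h, h.2, rfl⟩
    · exact Subtype.ext (mul_left_cancel (Units.ext e))
    · simp only [Finset.mem_filter, Finset.mem_univ, true_and] at hw
      obtain ⟨hw, h, hh, rfl⟩ := hw
      refine ⟨⟨h, hh⟩, Finset.mem_filter.mpr ⟨Finset.mem_univ _, ?_⟩, rfl⟩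
      simpa [levelRestrict] using hw
  rw [Finset.sum_congr rfl fun w _ => expAdj_eq_ite hq _ _ w, expAdj_eq_ite hq,
    ZMod.val_natCast_val_pow_succ, Finset.sum_boole, Finset.filter_filter, hcount,
    MonoidHom.card_filter_mul_eq _ _ Units.val_injective, range_levelRestrict, map_pow,
    map_levelHom_baseUnit]
  push_cast
  rw [mul_ite, mul_one, mul_zero]

theorem trace_pow_succ_expAdj (m k : ℕ) :
    trace (expAdj p m q ^ (k + 1)) = (Nat.card (expSubgroup hq m) : ℤ) ^ (k + 1) := by
  induction m with
  | zero =>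
    have : Subsingleton (ZMod (p ^ 0)) := by rw [pow_zero]; infer_instance
    have hA : expAdj p 0 q = 1 := by
      ext x w
      rw [Subsingleton.elim x w, one_apply_eq]
      exact if_pos ⟨0, Subsingleton.elim _ _, Subsingleton.elim _ _⟩
    rw [hA, one_pow, trace_one, Subsingleton.elim (expSubgroup hq 0) ⊥, card_bot, ZMod.card]
    simp
  | succ n ih =>
    have hquot : (of fun c c' => ∑ w with levelHom p n w = c',
        expAdj p (n + 1) q (c.val : ZMod (p ^ (n + 1))) w) =
        (Nat.card (levelRestrict hq n).ker : ℤ) • expAdj p n q := by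
      ext c c'
      rw [of_apply, sum_fibre_expAdj_succ, Matrix.smul_apply, smul_eq_mul]
    rw [trace_pow_succ_eq_of_row_eq _ (levelHom p n) (fun c => (c.val : ZMod (p ^ (n + 1))))
      (expAdj_succ_row_eq hq n), hquot, smul_pow,
      trace_smul, ih, card_expSubgroup_succ, smul_eq_mul]
    push_cast
    ring

end ExpGraph

theorem trace_pow_expAdj_le_general (p n k : ℕ) (q : ℤ) [Fact p.Prime]
    (hk : 0 < k) (hq : IsCoprime q (p : ℤ)) :
    Matrix.trace ((expAdj p n q) ^ k) ≤ ((p : ℤ) - 1) ^ k := by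
  obtain ⟨k, rfl⟩ := Nat.exists_eq_add_one_of_ne_zero hk.ne'
  have hcard : Nat.card (expSubgroup hq n) ≤ p - 1 :=
    Nat.le_of_dvd (Nat.sub_pos_of_lt (Fact.out : p.Prime).one_lt)
      (Nat.card_zpowers (baseUnit hq n ^ p ^ n) ▸ ZMod.orderOf_pow_prime_pow_dvd n.le_succ _)
  rw [trace_pow_succ_expAdj hq]
  gcongr
  rw [← Nat.cast_one, ← Nat.cast_sub (Fact.out : p.Prime).one_le]
  exact_mod_cast hcard

theorem trace_pow_expAdj_le (p n k : ℕ) (q : ℤ) [Fact p.Prime]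
    (hn : 0 < n) (hk : 0 < k) (hq : IsCoprime q (p : ℤ)) :
    Matrix.trace ((expAdj p n q) ^ k) ≤ ((p : ℤ) - 1) ^ k :=
  trace_pow_expAdj_le_general p n k q hk hq
end

section
/- Let p be a prime, n a positive integer, q an integer coprime to p that is a primitive root modulo p, and k a positive integer. Then the number of k-cycles with a marked initial vertex in the exponentiation graph Γ_{p,n,q} (equivalently, the trace of the k-th power of its adjacency matrix) is exactly (p-1)^k. -/
open Classical

/-!
The out-neighbours of `x` in `Γ_{p,n,q}` are the `q ^ y` with `y ≡ x (mod p ^ n)`, i.e. the coset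
`q ^ x * H` of `H = ⟨q ^ p ^ (n - 1)⟩`. Since `q ^ p ^ (n - 1) ≡ q (mod p)` and `q` is a primitive
root mod `p`, the group `H` has order exactly `p - 1`. Hence the coset only depends on
`x mod p ^ (n - 1)`, and reduction mod `p ^ (n - 1)` maps it bijectively onto the out-neighbourhood
of `x mod p ^ (n - 1)` one level down. So `A_n = P * B` with `B * P = A_(n-1)`, which gives
`tr (A_n ^ k) = tr (A_(n-1) ^ k)`. Every row of `A_1` is the indicator of the units, so
`tr (A_1 ^ k) = (p - 1) ^ k`.
-/

open Finset

namespace Matrix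

variable {α β R : Type*} [Fintype α] [Fintype β] [DecidableEq α] [DecidableEq β] [CommSemiring R]

theorem mul_mul_pow (M : Matrix α β R) (N : Matrix β α R) (j : ℕ) :
    N * (M * N) ^ j = (N * M) ^ j * N := by
  induction j with
  | zero => simp
  | succ j ih =>
    rw [pow_succ, ← Matrix.mul_assoc, ih, pow_succ]
    simp only [Matrix.mul_assoc]

theorem trace_pow_mul_comm (M : Matrix α β R) (N : Matrix β α R) {k : ℕ} (hk : k ≠ 0) :
    trace ((M * N) ^ k) = trace ((N * M) ^ k) := by
  obtain ⟨j, rfl⟩ := Nat.exists_eq_succ_of_ne_zero hk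
  rw [pow_succ', Matrix.mul_assoc, trace_mul_comm, mul_mul_pow, Matrix.mul_assoc, ← pow_succ]

/-- `A = P * B` with `P` the graph of `r`, and `B * P` is the matrix on the right. -/
theorem trace_pow_eq_of_apply_eq_ite_mem (A : Matrix α α R) (r : α → β) (N : β → Finset α)
    (hA : ∀ x w, A x w = if w ∈ N (r x) then 1 else 0) {k : ℕ} (hk : k ≠ 0) :
    trace (A ^ k) = trace ((of fun u v => (#{w ∈ N u | r w = v} : R)) ^ k) := by
  let P : Matrix α β R := of fun x u => if r x = u then 1 else 0
  let B : Matrix β α R := of fun u w => if w ∈ N u then 1 else 0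
  have hPB : A = P * B := by
    ext x w
    simp only [hA, P, B, mul_apply, of_apply, ite_mul, one_mul, zero_mul, sum_ite_eq, mem_univ,
      if_true]
  have hBP : B * P = of fun u v => (#{w ∈ N u | r w = v} : R) := by
    ext u v
    simp only [P, B, mul_apply, of_apply, ite_mul, one_mul, zero_mul]
    rw [← sum_filter, filter_mem_eq_inter, univ_inter, sum_boole]
  rw [hPB, trace_pow_mul_comm P B hk, hBP]

end Matrix

theorem Finset.card_filter_eq_ite_of_injOn {α β : Type*} [DecidableEq β] {s : Finset α}
    {r : α → β} (hr : Set.InjOn r s) (v : β) :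
    #{w ∈ s | r w = v} = if v ∈ s.image r then 1 else 0 := by
  have h : ({w ∈ s | r w = v}).image r = (s.image r).filter (· = v) := by rw [filter_image]
  rw [← card_image_of_injOn (hr.mono (filter_subset _ _)), h, filter_eq']
  split_ifs <;> simp

theorem exists_pow_add_iff_exists_lt_orderOf {M : Type*} [Monoid M] {g : M} (hg : IsOfFinOrder g)
    (c : ℕ) (P : M → Prop) : (∃ s, P (g ^ (c + s))) ↔ ∃ t < orderOf g, P (g ^ t) := by
  constructor
  · rintro ⟨s, hs⟩
    exact ⟨(c + s) % orderOf g, Nat.mod_lt _ hg.orderOf_pos, by rwa [pow_mod_orderOf]⟩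
  · rintro ⟨t, -, ht⟩
    refine ⟨orderOf g * c - c + t, ?_⟩
    have hc : c ≤ orderOf g * c := Nat.le_mul_of_pos_left c hg.orderOf_pos
    rwa [← Nat.add_assoc, Nat.add_sub_cancel' hc, pow_add, pow_mul, pow_orderOf_eq_one, one_pow,
      one_mul]

theorem injOn_mul_pow_Iio_orderOf {M : Type*} [Monoid M] {x : M} (hx : IsUnit x) (g : M) :
    (Set.Iio (orderOf g)).InjOn (x * g ^ ·) :=
  fun _ ha _ hb h => pow_injOn_Iio_orderOf ha hb (hx.mul_left_cancel h)

theorem ZMod.exists_natCast_eq_and_iff {N : ℕ} [NeZero N] (x : ZMod N) (P : ℕ → Prop) :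
    (∃ y : ℕ, (y : ZMod N) = x ∧ P y) ↔ ∃ s, P (x.val + N * s) := by
  constructor
  · rintro ⟨y, rfl, hy⟩
    refine ⟨y / N, ?_⟩
    rwa [ZMod.val_natCast, Nat.mod_add_div]
  · rintro ⟨s, hs⟩
    exact ⟨_, by simp, hs⟩

section

variable {p : ℕ} {q : ℤ}

theorem isUnit_intCast_zmod_pow (hq : IsCoprime q p) (n : ℕ) : IsUnit (q : ZMod (p ^ n)) :=
  (ZMod.coe_int_isUnit_iff_isCoprime q _).mpr (by exact_mod_cast hq.symm.pow_left)

/-- The coset `q ^ a * ⟨q ^ p ^ e⟩` in `ZMod (p ^ n)`, listed as `p - 1` powers; this is the whole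
coset (without repetitions) when `q ^ p ^ e` has order `p - 1`. -/
def expCoset (p n e a : ℕ) (q : ℤ) : Finset (ZMod (p ^ n)) :=
  (range (p - 1)).image fun t => (q : ZMod (p ^ n)) ^ a * ((q : ZMod (p ^ n)) ^ p ^ e) ^ t

theorem image_castHom_expCoset {m n e a : ℕ} (h : p ^ m ∣ p ^ n) :
    (expCoset p n e a q).image (ZMod.castHom h (ZMod (p ^ m))) = expCoset p m e a q := by
  simp only [expCoset, image_image]
  congr 1
  ext t
  simp only [Function.comp_apply, map_mul, map_pow, map_intCast]

theorem injOn_range_intCast_pow_mul_pow (hq : IsCoprime q p) {n e a : ℕ}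
    (hg : orderOf ((q : ZMod (p ^ n)) ^ p ^ e) = p - 1) :
    Set.InjOn (fun t => (q : ZMod (p ^ n)) ^ a * ((q : ZMod (p ^ n)) ^ p ^ e) ^ t)
      (range (p - 1)) := by
  rw [coe_range, ← hg]
  exact injOn_mul_pow_Iio_orderOf ((isUnit_intCast_zmod_pow hq n).pow a) _

theorem card_expCoset (hq : IsCoprime q p) {n e a : ℕ}
    (hg : orderOf ((q : ZMod (p ^ n)) ^ p ^ e) = p - 1) : #(expCoset p n e a q) = p - 1 := by
  rw [expCoset, card_image_of_injOn (injOn_range_intCast_pow_mul_pow hq hg), card_range]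

theorem injOn_castHom_expCoset (hq : IsCoprime q p) {m n e a : ℕ} (h : p ^ m ∣ p ^ n)
    (hg : orderOf ((q : ZMod (p ^ m)) ^ p ^ e) = p - 1) :
    Set.InjOn (ZMod.castHom h (ZMod (p ^ m))) (expCoset p n e a q) := by
  rw [expCoset, coe_image]
  refine Set.InjOn.image_of_comp ?_
  convert injOn_range_intCast_pow_mul_pow (a := a) hq hg using 1
  ext t
  simp only [Function.comp_apply, map_mul, map_pow, map_intCast]

variable [hp : Fact p.Prime]

theorem orderOf_intCast_zmod_prime (hq : IsCoprime q p)
    (hprim : ∀ u : (ZMod p)ˣ, ∃ m : ℕ, (q : ZMod p) ^ m = (u : ZMod p)) :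
    orderOf (q : ZMod p) = p - 1 := by
  let u := ZMod.unitOfIsCoprime q hq
  have hgen : ∀ v : (ZMod p)ˣ, v ∈ Subgroup.zpowers u := fun v => by
    obtain ⟨m, hm⟩ := hprim v
    exact ⟨m, Units.ext (by simp [u, hm])⟩
  rw [← ZMod.coe_unitOfIsCoprime q hq, orderOf_units, orderOf_eq_card_of_forall_mem_zpowers hgen,
    Nat.card_eq_fintype_card, ZMod.card_units_eq_totient, Nat.totient_prime hp.out]

theorem orderOf_intCast_pow_prime_pow (hq : IsCoprime q p)
    (hprim : ∀ u : (ZMod p)ˣ, ∃ m : ℕ, (q : ZMod p) ^ m = (u : ZMod p)) {n e : ℕ} (hne : n ≤ e) :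
    orderOf ((q : ZMod (p ^ (n + 1))) ^ p ^ e) = p - 1 := by
  refine Nat.dvd_antisymm (orderOf_dvd_of_pow_eq_one ?_) ?_
  · obtain ⟨u, hu⟩ := isUnit_intCast_zmod_pow hq (n + 1)
    obtain ⟨d, rfl⟩ := Nat.exists_eq_add_of_le hne
    have htot : p ^ (n + d) * (p - 1) = (p ^ (n + 1)).totient * p ^ d := by
      rw [Nat.totient_prime_pow_succ hp.out]
      ring
    rw [← pow_mul, htot, pow_mul, ← hu, ← Units.val_pow_eq_pow_val, ZMod.pow_totient,
      Units.val_one, one_pow]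
  · let red := ZMod.castHom (dvd_pow_self p n.succ_ne_zero) (ZMod p)
    have hred : red ((q : ZMod (p ^ (n + 1))) ^ p ^ e) = q := by
      rw [map_pow, map_intCast, ZMod.pow_card_pow]
    rw [← orderOf_intCast_zmod_prime hq hprim, ← hred]
    exact orderOf_map_dvd (red : ZMod (p ^ (n + 1)) →* ZMod p) _

theorem exists_natCast_eq_and_pow_eq_iff_mem_expCoset (hq : IsCoprime q p)
    (hprim : ∀ u : (ZMod p)ˣ, ∃ m : ℕ, (q : ZMod p) ^ m = (u : ZMod p)) {n e : ℕ} (hne : n ≤ e)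
    (hen : e ≤ n + 1) (x w : ZMod (p ^ (n + 1))) :
    (∃ y : ℕ, (y : ZMod (p ^ (n + 1))) = x ∧ (q : ZMod (p ^ (n + 1))) ^ y = w) ↔
      w ∈ expCoset p (n + 1) e (x.val % p ^ e) q := by
  set Q := (q : ZMod (p ^ (n + 1)))
  set g := Q ^ p ^ e
  have hg : orderOf g = p - 1 := orderOf_intCast_pow_prime_pow hq hprim hne
  -- `g` has order `p - 1` and `p ≡ 1 (mod p - 1)`
  have hgp : g ^ p ^ (n + 1 - e) = g := by
    have h : p ^ (n + 1 - e) ≡ 1 [MOD orderOf g] := by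
      simpa [hg] using (Nat.modEq_sub hp.out.one_le).pow (n + 1 - e)
    rw [← pow_mod_orderOf g, h, pow_mod_orderOf, pow_one]
  have hsplit : ∀ s, Q ^ (x.val + p ^ (n + 1) * s) =
      Q ^ (x.val % p ^ e) * g ^ (x.val / p ^ e + s) := by
    intro s
    have hexp : x.val + p ^ (n + 1) * s =
        x.val % p ^ e + p ^ e * (x.val / p ^ e + p ^ (n + 1 - e) * s) := by
      rw [mul_add, ← Nat.add_assoc, Nat.mod_add_div, ← Nat.mul_assoc, ← pow_add,
        Nat.add_sub_cancel' hen]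
    rw [hexp, pow_add Q, pow_mul Q, pow_add g, pow_mul g, hgp, ← pow_add g]
  have hfin : IsOfFinOrder g := orderOf_pos_iff.mp (hg ▸ Nat.sub_pos_of_lt hp.out.one_lt)
  rw [ZMod.exists_natCast_eq_and_iff x (Q ^ · = w)]
  simp only [hsplit]
  rw [exists_pow_add_iff_exists_lt_orderOf hfin _ (Q ^ (x.val % p ^ e) * · = w), hg]
  simp [expCoset, Q, g]

theorem trace_pow_expAdj_succ_succ (hq : IsCoprime q p)
    (hprim : ∀ u : (ZMod p)ˣ, ∃ m : ℕ, (q : ZMod p) ^ m = (u : ZMod p)) (n : ℕ) {k : ℕ}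
    (hk : k ≠ 0) :
    Matrix.trace (expAdj p (n + 1 + 1) q ^ k) = Matrix.trace (expAdj p (n + 1) q ^ k) := by
  have hdvd : p ^ (n + 1) ∣ p ^ (n + 1 + 1) := pow_dvd_pow p (n + 1).le_succ
  let r := ZMod.castHom hdvd (ZMod (p ^ (n + 1)))
  have hr : ∀ x, (r x).val = x.val % p ^ (n + 1) := fun x => by
    rw [ZMod.castHom_apply, ZMod.cast_eq_val, ZMod.val_natCast]
  have hg := orderOf_intCast_pow_prime_pow hq hprim n.le_succ
  rw [Matrix.trace_pow_eq_of_apply_eq_ite_mem _ r (fun u => expCoset p (n + 1 + 1) (n + 1) u.val q)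
    ?_ hk]
  · congr 2
    ext u v
    rw [Matrix.of_apply, card_filter_eq_ite_of_injOn (injOn_castHom_expCoset hq hdvd hg),
      image_castHom_expCoset, ← Nat.mod_eq_of_lt u.val_lt]
    simp [expAdj, exists_natCast_eq_and_pow_eq_iff_mem_expCoset hq hprim n.le_succ le_rfl]
  · intro x w
    simp [expAdj, hr, exists_natCast_eq_and_pow_eq_iff_mem_expCoset hq hprim le_rfl (n + 1).le_succ]

theorem trace_pow_expAdj_one (hq : IsCoprime q p)
    (hprim : ∀ u : (ZMod p)ˣ, ∃ m : ℕ, (q : ZMod p) ^ m = (u : ZMod p)) {k : ℕ} (hk : k ≠ 0) :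
    Matrix.trace (expAdj p 1 q ^ k) = ((p : ℤ) - 1) ^ k := by
  have hg := orderOf_intCast_pow_prime_pow hq hprim (le_refl 0)
  rw [Matrix.trace_pow_eq_of_apply_eq_ite_mem _ (fun _ => ()) (fun _ => expCoset p (0 + 1) 0 0 q)
    ?_ hk]
  · have hM : (Matrix.of fun (_ _ : Unit) => (#{w ∈ expCoset p (0 + 1) 0 0 q | () = ()} : ℤ)) =
        Matrix.diagonal fun _ => (p : ℤ) - 1 := by
      ext ⟨⟩ ⟨⟩
      simp [card_expCoset hq hg, Nat.cast_sub hp.out.one_le]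
    rw [hM, Matrix.diagonal_pow, Matrix.trace_diagonal]
    simp
  · intro x w
    simp [expAdj, Nat.mod_one,
      exists_natCast_eq_and_pow_eq_iff_mem_expCoset hq hprim (le_refl 0) zero_le_one]

end

theorem trace_pow_expAdj_eq_of_primitive (p n k : ℕ) (q : ℤ) [Fact p.Prime]
    (hn : 0 < n) (hk : 0 < k) (hq : IsCoprime q (p : ℤ))
    (hprim : ∀ u : (ZMod p)ˣ, ∃ m : ℕ, (q : ZMod p) ^ m = (u : ZMod p)) :
    Matrix.trace ((expAdj p n q) ^ k) = ((p : ℤ) - 1) ^ k := by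
  obtain ⟨m, rfl⟩ := Nat.exists_eq_add_one_of_ne_zero hn.ne'
  clear hn
  induction m with
  | zero => exact trace_pow_expAdj_one hq hprim hk.ne'
  | succ m ih => rw [trace_pow_expAdj_succ_succ hq hprim m hk.ne', ih]
end

section
/- Let p be a prime, n a positive integer, q an integer coprime to p, and k a positive integer. Define f : {0,1,...,p^n-1} → {0,1,...,p^n-1} by f(x) = q^x mod p^n. Then the number of k-periodic points of f (points x with f^[k](x) = x) is at most (p-1)^k. -/
/-!
By Fermat and the lifting `p ∣ c - 1 → p ^ (m + 1) ∣ c ^ p ^ m - 1`, if `a ≡ b [MOD p ^ m]` and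
`q ^ a ≡ q ^ b [ZMOD p]` then `q ^ a ≡ q ^ b [ZMOD p ^ (m + 1)]`. Hence if two orbits of
`x ↦ q ^ x` agree modulo `p` at every step, each application of the map gains one more power of
`p`, and after `n` steps the orbits coincide. A `k`-periodic point is therefore determined by the
residues modulo `p` of its first `k` iterates, which are powers of `q` and so nonzero.
-/
/-- Repeated exponentiation map on `ZMod (p^n)`: `x ↦ q^x mod p^n`, where the exponent is
the natural-number representative `x.val ∈ {0, ..., p^n - 1}` of `x`. -/
def expMap (p n : ℕ) (q : ℤ) [Fact p.Prime] : ZMod (p ^ n) → ZMod (p ^ n) :=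
  fun x => (q : ZMod (p ^ n)) ^ x.val

open Function

namespace Int

theorem prime_pow_succ_dvd_pow_prime_pow_sub_one {p : ℕ} [Fact p.Prime] {c : ℤ} (m : ℕ)
    (h : (c : ZMod p) ^ p ^ m = 1) : (p : ℤ) ^ (m + 1) ∣ c ^ p ^ m - 1 := by
  have hc : (p : ℤ) ∣ c - 1 := by
    rw [ZMod.pow_card_pow] at h
    rw [← ZMod.intCast_eq_intCast_iff_dvd_sub, h, Int.cast_one]
  simpa using dvd_sub_pow_of_dvd_sub hc m

theorem pow_modEq_pow_of_modEq {p : ℕ} [Fact p.Prime] {q : ℤ} (hq : IsCoprime q p)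
    {a b m : ℕ} (hab : a ≡ b [MOD p ^ m]) (h : q ^ a ≡ q ^ b [ZMOD p]) :
    q ^ a ≡ q ^ b [ZMOD p ^ (m + 1)] := by
  wlog hba : b ≤ a generalizing a b
  · exact (this hab.symm h.symm (le_of_not_ge hba)).symm
  obtain ⟨s, hs⟩ := (Nat.modEq_iff_dvd' hba).1 hab.symm
  have ha : a = b + p ^ m * s := by omega
  have hunit : IsUnit ((q : ZMod p) ^ b) :=
    ((ZMod.coe_int_isUnit_iff_isCoprime q p).2 hq.symm).pow b
  have hpow : ((q ^ s : ℤ) : ZMod p) ^ p ^ m = 1 := by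
    have h' := (ZMod.intCast_eq_intCast_iff _ _ p).2 h
    rw [ha] at h'
    push_cast at h'
    refine hunit.mul_left_cancel ?_
    calc (q : ZMod p) ^ b * ((q ^ s : ℤ) : ZMod p) ^ p ^ m = (q : ZMod p) ^ (b + p ^ m * s) := by
          push_cast; ring
      _ = (q : ZMod p) ^ b * 1 := by rw [h', mul_one]
  calc q ^ a = q ^ b * (q ^ s) ^ p ^ m := by rw [ha, pow_add, ← pow_mul, mul_comm s]
    _ ≡ q ^ b * 1 [ZMOD p ^ (m + 1)] :=
      (Int.modEq_of_dvd (prime_pow_succ_dvd_pow_prime_pow_sub_one m hpow)).symm.mul_left _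
    _ = q ^ b := mul_one _

end Int

section expMap

variable {p n : ℕ} [Fact p.Prime] {q : ℤ}

theorem val_expMap_modEq (x : ZMod (p ^ n)) :
    ((expMap p n q x).val : ℤ) ≡ q ^ x.val [ZMOD p ^ n] := by
  have h : (((expMap p n q x).val : ℤ) : ZMod (p ^ n)) = ((q ^ x.val : ℤ) : ZMod (p ^ n)) := by
    simp [expMap]
  exact_mod_cast (ZMod.intCast_eq_intCast_iff _ _ _).1 h

theorem natCast_val_expMap_ne_zero (hq : IsCoprime q p) (hn : 0 < n) (x : ZMod (p ^ n)) :
    ((expMap p n q x).val : ZMod p) ≠ 0 := by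
  have h := (ZMod.intCast_eq_intCast_iff _ _ p).2
    ((val_expMap_modEq (q := q) x).of_dvd (dvd_pow_self (p : ℤ) hn.ne'))
  push_cast at h
  rw [h]
  exact (((ZMod.coe_int_isUnit_iff_isCoprime q p).2 hq.symm).pow _).ne_zero

theorem val_expMap_modEq_of_modEq (hq : IsCoprime q p) {m : ℕ} (hmn : m < n)
    {x y : ZMod (p ^ n)} (hxy : x.val ≡ y.val [MOD p ^ m])
    (h : (expMap p n q x).val ≡ (expMap p n q y).val [MOD p]) :
    (expMap p n q x).val ≡ (expMap p n q y).val [MOD p ^ (m + 1)] := by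
  rw [← Int.natCast_modEq_iff] at h ⊢
  have hp : (p : ℤ) ∣ (p : ℤ) ^ n := dvd_pow_self _ (by omega)
  have hpm : (p : ℤ) ^ (m + 1) ∣ (p : ℤ) ^ n := pow_dvd_pow _ hmn
  have hx := val_expMap_modEq (q := q) x
  have hy := val_expMap_modEq (q := q) y
  push_cast
  refine ((hx.of_dvd hpm).trans (Int.pow_modEq_pow_of_modEq hq hxy ?_)).trans (hy.of_dvd hpm).symm
  exact ((hx.of_dvd hp).symm.trans h).trans (hy.of_dvd hp)

theorem val_iterate_expMap_modEq (hq : IsCoprime q p) {x y : ZMod (p ^ n)}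
    (h : ∀ i, ((expMap p n q)^[i] x).val ≡ ((expMap p n q)^[i] y).val [MOD p])
    {m i : ℕ} (hmn : m ≤ n) (hmi : m ≤ i) :
    ((expMap p n q)^[i] x).val ≡ ((expMap p n q)^[i] y).val [MOD p ^ m] := by
  induction m generalizing i with
  | zero => simp [Nat.modEq_one]
  | succ m ih =>
    obtain ⟨j, rfl⟩ : ∃ j, i = j + 1 := ⟨i - 1, by omega⟩
    have hstep := h (j + 1)
    simp only [iterate_succ_apply'] at hstep ⊢
    exact val_expMap_modEq_of_modEq hq (by omega) (ih (by omega) (by omega)) hstep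

theorem iterate_expMap_eq_of_forall_modEq (hq : IsCoprime q p) {x y : ZMod (p ^ n)}
    (h : ∀ i, ((expMap p n q)^[i] x).val ≡ ((expMap p n q)^[i] y).val [MOD p])
    {i : ℕ} (hi : n ≤ i) : (expMap p n q)^[i] x = (expMap p n q)^[i] y :=
  ZMod.val_injective _
    ((val_iterate_expMap_modEq hq h le_rfl hi).eq_of_lt_of_lt (ZMod.val_lt _) (ZMod.val_lt _))

theorem eq_of_isPeriodicPt_expMap (hq : IsCoprime q p) {k : ℕ} (hk : 0 < k)
    {x y : ZMod (p ^ n)} (hx : IsPeriodicPt (expMap p n q) k x)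
    (hy : IsPeriodicPt (expMap p n q) k y)
    (h : ∀ i < k, (((expMap p n q)^[i] x).val : ZMod p) = ((expMap p n q)^[i] y).val) :
    x = y := by
  have hmodp : ∀ i, ((expMap p n q)^[i] x).val ≡ ((expMap p n q)^[i] y).val [MOD p] := by
    intro i
    rw [← hx.iterate_mod_apply, ← hy.iterate_mod_apply, ← ZMod.natCast_eq_natCast_iff]
    exact h _ (Nat.mod_lt i hk)
  calc x = (expMap p n q)^[k * n] x := (hx.mul_const n).eq.symm
    _ = (expMap p n q)^[k * n] y :=
      iterate_expMap_eq_of_forall_modEq hq hmodp (Nat.le_mul_of_pos_left n hk)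
    _ = y := (hy.mul_const n).eq

end expMap

theorem card_periodicPts_expMap_le (p n k : ℕ) (q : ℤ) [Fact p.Prime]
    (hn : 0 < n) (hk : 0 < k) (hq : IsCoprime q (p : ℤ)) :
    {x : ZMod (p ^ n) | (expMap p n q)^[k] x = x}.ncard ≤ (p - 1) ^ k := by
  classical
  set f := expMap p n q
  let nonzeroTuples : Finset (Fin k → ZMod p) := Fintype.piFinset fun _ => {0}ᶜ
  have hcard : nonzeroTuples.card = (p - 1) ^ k := by
    simp [nonzeroTuples, Finset.card_compl, ZMod.card]
  rw [← hcard, ← Set.ncard_coe_finset]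
  refine Set.ncard_le_ncard_of_injOn (fun x i => ((f^[i] x).val : ZMod p)) ?_ ?_ (Set.toFinite _)
  · intro x hx
    rw [Finset.mem_coe, Fintype.mem_piFinset]
    intro i
    rw [Finset.mem_compl, Finset.mem_singleton]
    obtain ⟨z, hz⟩ :=
      periodicPts_subset_range (mk_mem_periodicPts hk (IsPeriodicPt.apply_iterate hx i))
    rw [← hz]
    exact natCast_val_expMap_ne_zero hq hn z
  · intro x hx y hy hxy
    exact eq_of_isPeriodicPt_expMap hq hk hx hy fun i hi => congrFun hxy ⟨i, hi⟩
end

section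
/- Let p be a prime, n ≥ 2 an integer, and q an integer coprime to p. For x ∈ ℤ define O^n(x) = { w ∈ ZMod (p^n) : ∃ y ∈ ℕ, y ≡ x (mod p^n) and w ≡ q^y (mod p^n) }. If x ≡ x' (mod p^{n-1}), then O^n(x) = O^n(x'). -/
/-- The set of out-neighbors of `x` in the exponentiation graph modulo `p^n`:
residues modulo `p^n` of `q^y` over all natural numbers `y ≡ x (mod p^n)`. -/
def outNbrs (p n : ℕ) (q x : ℤ) : Set (ZMod (p ^ n)) :=
  {w | ∃ y : ℕ, ((y : ℤ) : ZMod (p ^ n)) = (x : ZMod (p ^ n)) ∧ (q : ZMod (p ^ n)) ^ y = w}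

/-! The residue of `q` is a unit modulo `p^n`, so its order `d` divides
`φ(p^n) = p^(n-1) (p-1)`, whence `gcd(p^n, d) ∣ p^(n-1)`. The power `q^y` only depends on
`y mod d`, and by Bézout the exponents `y ≡ x (mod p^n)` reach every class mod `d` that is
`≡ x (mod gcd(p^n, d))`; so `O^n(x)` only depends on `x mod gcd(p^n, d)`. -/

open scoped Nat

theorem Int.exists_natCast_modEq_of_gcd_dvd {N d : ℕ} (hN : N ≠ 0) {z : ℤ}
    (h : (N.gcd d : ℤ) ∣ z) : ∃ t : ℕ, d ∣ t ∧ (t : ℤ) ≡ z [ZMOD N] := by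
  obtain ⟨k, rfl⟩ := h
  -- Bézout writes `gcd N d * k = N * a + d * y`; reducing `y` mod `N` makes the witness natural.
  set y := N.gcdB d * k
  have hy : 0 ≤ y % N := Int.emod_nonneg _ (by exact_mod_cast hN)
  refine ⟨d * (y % N).toNat, dvd_mul_right _ _, ?_⟩
  push_cast [Int.toNat_of_nonneg hy]
  calc (d : ℤ) * (y % N) ≡ d * y [ZMOD N] := (Int.mod_modEq y N).mul_left _
    _ ≡ d * y + N * (N.gcdA d * k) [ZMOD N] := Int.modEq_add_fac_self.symm
    _ = N.gcd d * k := by rw [Nat.gcd_eq_gcd_ab]; ring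

theorem exists_pow_eq_of_modEq_gcd_orderOf {M : Type*} [Monoid M] (g : M) {N : ℕ} (hN : N ≠ 0)
    {x x' : ℤ} (h : x ≡ x' [ZMOD N.gcd (orderOf g)]) {y : ℕ} (hy : ((y : ℤ) : ZMod N) = x) :
    ∃ y' : ℕ, ((y' : ℤ) : ZMod N) = x' ∧ g ^ y' = g ^ y := by
  obtain ⟨t, hdt, ht⟩ := Int.exists_natCast_modEq_of_gcd_dvd hN h.dvd
  refine ⟨y + t, ?_, by rw [pow_add, orderOf_dvd_iff_pow_eq_one.mp hdt, mul_one]⟩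
  have htx : ((t : ℤ) : ZMod N) = ((x' - x : ℤ) : ZMod N) :=
    (ZMod.intCast_eq_intCast_iff _ _ _).mpr ht
  push_cast at hy htx ⊢
  rw [hy, htx]
  ring

theorem ZMod.orderOf_intCast_dvd_totient {m : ℕ} {q : ℤ} (hq : IsCoprime q m) :
    orderOf (q : ZMod m) ∣ φ m :=
  orderOf_dvd_of_pow_eq_one <| by
    rw [← ZMod.coe_unitOfIsCoprime q hq, ← Units.val_pow_eq_pow_val, ZMod.pow_totient,
      Units.val_one]

theorem Nat.gcd_prime_pow_dvd_pow_pred_of_dvd_totient {p n d : ℕ} (hp : p.Prime)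
    (hd : d ∣ φ (p ^ n)) : (p ^ n).gcd d ∣ p ^ (n - 1) := by
  cases n with
  | zero => simp
  | succ k =>
    rw [Nat.totient_prime_pow_succ hp] at hd
    calc (p ^ (k + 1)).gcd d ∣ (p ^ k * p).gcd (p ^ k * (p - 1)) := by
          rw [← pow_succ]; exact Nat.gcd_dvd_gcd_of_dvd_right _ hd
      _ = p ^ k := by
          rw [Nat.gcd_mul_left,
            (Nat.coprime_self_sub_right hp.one_le).mpr (Nat.coprime_one_right _), mul_one]

theorem outNbrs_eq_of_modEq_general (p n : ℕ) (q : ℤ) (hp : p.Prime)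
    (hq : IsCoprime q (p : ℤ)) (x x' : ℤ) (h : x ≡ x' [ZMOD (p ^ (n - 1) : ℕ)]) :
    outNbrs p n q x = outNbrs p n q x' := by
  have hN : p ^ n ≠ 0 := pow_ne_zero n hp.ne_zero
  have hord : orderOf (q : ZMod (p ^ n)) ∣ φ (p ^ n) :=
    ZMod.orderOf_intCast_dvd_totient (by exact_mod_cast hq.pow_right)
  have hgcd : x ≡ x' [ZMOD (p ^ n).gcd (orderOf (q : ZMod (p ^ n)))] :=
    h.of_dvd (Int.natCast_dvd_natCast.mpr (Nat.gcd_prime_pow_dvd_pow_pred_of_dvd_totient hp hord))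
  have hsub : ∀ {a b : ℤ}, a ≡ b [ZMOD (p ^ n).gcd (orderOf (q : ZMod (p ^ n)))] →
      outNbrs p n q a ⊆ outNbrs p n q b := by
    rintro a b hab w ⟨y, hy, rfl⟩
    exact exists_pow_eq_of_modEq_gcd_orderOf _ hN hab hy
  exact (hsub hgcd).antisymm (hsub hgcd.symm)

theorem outNbrs_eq_of_modEq (p n : ℕ) (q : ℤ) (hp : p.Prime) (hn : 2 ≤ n)
    (hq : IsCoprime q (p : ℤ)) (x x' : ℤ) (h : x ≡ x' [ZMOD (p ^ (n - 1) : ℕ)]) :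
    outNbrs p n q x = outNbrs p n q x' :=
  outNbrs_eq_of_modEq_general p n q hp hq x x' h
end
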